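/- Sign constancy of subgradient differences on a cover block: Let F : 2^[n] → ℝ be submodular with F(∅) = 0 and Lovász subgradient g. Let x, y ∈ [0,1]^n with y ≥ x coordinatewise (or y ≤ x), and let {I_1,...,I_k} be a k-cover of (x,y). Then for each s ∈ [k], the differences g(y)_i - g(x)_i have the same sign for all i ∈ I_s; in particular |Σ_{i∈I_s} (g(y)_i - g(x)_i)| = Σ_{i∈I_s} |g(y)_i - g(x)_i|. -/

import Mathlib

open Finset

/-- A set function on subsets of `Fin n` is submodular (diminishing returns). -/
def Submodular {n : ℕ} (F : Finset (Fin n) → ℝ) : Prop :=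
  ∀ ⦃A B : Finset (Fin n)⦄, A ⊆ B → ∀ i ∉ B,
    F (insert i A) - F A ≥ F (insert i B) - F B

/-- `P` is the permutation consistent with `x`: coordinates in nonincreasing order,
ties broken by increasing index. -/
def Consistent {n : ℕ} (x : Fin n → ℝ) (P : Equiv.Perm (Fin n)) : Prop :=
  ∀ i j : Fin n, i ≤ j → x (P i) ≥ x (P j) ∧ (x (P i) = x (P j) → P i ≤ P j)

/-- `P[k] = {P_1, …, P_k}` (0-indexed: the images of positions `< k`). -/
def prefixSet {n : ℕ} (P : Equiv.Perm (Fin n)) (k : ℕ) : Finset (Fin n) :=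
  (Finset.univ.filter (fun i : Fin n => (i : ℕ) < k)).image P

/-- The Lovász extension of `F` at `x`, expressed via the permutation `P` consistent
with `x`. -/
def lovaszExt {n : ℕ} (F : Finset (Fin n) → ℝ) (P : Equiv.Perm (Fin n))
    (x : Fin n → ℝ) : ℝ :=
  ∑ i : Fin n, (F (prefixSet P ((i : ℕ) + 1)) - F (prefixSet P (i : ℕ))) * x (P i)

/-- The Lovász subgradient at `x`: `g(x)_{P_i} = F(P[i]) - F(P[i-1])`. -/
def lovaszGrad {n : ℕ} (F : Finset (Fin n) → ℝ) (P : Equiv.Perm (Fin n)) :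
    Fin n → ℝ :=
  fun j => F (prefixSet P ((P.symm j : ℕ) + 1)) - F (prefixSet P ((P.symm j : ℕ)))

/-- `I` is a `k`-cover of `(x, y)`: a partition of `[n]` whose blocks have
consecutive preimages under both consistent permutations `P` (for `x`) and `Q`
(for `y`), and on whose non-singleton blocks `x` and `y` agree. -/
def IsCover {n k : ℕ} (x y : Fin n → ℝ) (P Q : Equiv.Perm (Fin n))
    (I : Fin k → Finset (Fin n)) : Prop :=
  (∀ s t : Fin k, s ≠ t → Disjoint (I s) (I t)) ∧
  (Finset.univ.biUnion I = Finset.univ) ∧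
  (∀ s : Fin k, ∃ a b : ℕ, ∀ i : Fin n, P i ∈ I s ↔ a ≤ (i : ℕ) ∧ (i : ℕ) < b) ∧
  (∀ s : Fin k, ∃ a b : ℕ, ∀ i : Fin n, Q i ∈ I s ↔ a ≤ (i : ℕ) ∧ (i : ℕ) < b) ∧
  (∀ s : Fin k, 1 < (I s).card → ∀ i ∈ I s, x i = y i)

/-!
If `x ≤ y` and `x i = y i`, every `j` preceding `i` in the order of `x` has
`y j ≥ x j ≥ x i = y i`, with the same tie-break, so it still precedes `i` in the order of `y`.
The prefix in front of `i` thus only grows, and by submodularity the marginal gain `g(·)_i`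
shrinks: `g(y)_i ≤ g(x)_i`. On a cover block with more than one element `x = y`, so every
difference there has the sign dictated by the direction of `x ≤ y`; smaller blocks are trivial.
-/

lemma mem_prefixSet {n : ℕ} (P : Equiv.Perm (Fin n)) (k : ℕ) (j : Fin n) :
    j ∈ prefixSet P k ↔ (P.symm j : ℕ) < k := by
  simp only [prefixSet, mem_image, mem_filter, mem_univ, true_and]
  constructor
  · rintro ⟨i, hi, rfl⟩
    simpa using hi
  · exact fun h => ⟨P.symm j, h, P.apply_symm_apply j⟩

lemma insert_prefixSet_symm {n : ℕ} (P : Equiv.Perm (Fin n)) (i : Fin n) :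
    insert i (prefixSet P (P.symm i)) = prefixSet P ((P.symm i : ℕ) + 1) := by
  ext j
  simp only [mem_insert, mem_prefixSet, Nat.lt_succ_iff_lt_or_eq, Fin.val_inj,
    P.symm_apply_eq, Equiv.apply_symm_apply]
  constructor
  · rintro (rfl | h) <;> simp_all
  · rintro (h | h) <;> simp_all

lemma Consistent.symm_lt_symm_iff {n : ℕ} {x : Fin n → ℝ} {P : Equiv.Perm (Fin n)}
    (hP : Consistent x P) (i j : Fin n) :
    P.symm j < P.symm i ↔ x i < x j ∨ (x i = x j ∧ j < i) := by
  constructor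
  · intro hlt
    have hji : j ≠ i := fun h => (h ▸ hlt).false
    obtain ⟨hge, htie⟩ := hP _ _ hlt.le
    simp only [Equiv.apply_symm_apply] at hge htie
    rcases hge.lt_or_eq with h | h
    · exact Or.inl h
    · exact Or.inr ⟨h, (htie h.symm).lt_of_ne hji⟩
  · intro h
    by_contra! hle
    obtain ⟨hge, htie⟩ := hP _ _ hle
    simp only [Equiv.apply_symm_apply] at hge htie
    rcases h with h | ⟨heq, hlt⟩
    · exact hge.not_gt h
    · exact (htie heq).not_gt hlt

lemma prefixSet_symm_subset_of_le_of_eq {n : ℕ} {x y : Fin n → ℝ} {P Q : Equiv.Perm (Fin n)}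
    (hP : Consistent x P) (hQ : Consistent y Q) (hxy : ∀ j, x j ≤ y j) {i : Fin n}
    (hi : x i = y i) : prefixSet P (P.symm i) ⊆ prefixSet Q (Q.symm i) := by
  intro j hj
  rw [mem_prefixSet, Fin.val_fin_lt, hP.symm_lt_symm_iff] at hj
  rw [mem_prefixSet, Fin.val_fin_lt, hQ.symm_lt_symm_iff]
  rcases hj with h | ⟨heq, hlt⟩
  · exact Or.inl (by linarith [hxy j])
  · rcases (show y i ≤ y j by linarith [hxy j]).lt_or_eq with h | h
    · exact Or.inl h
    · exact Or.inr ⟨h, hlt⟩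

lemma Submodular.lovaszGrad_le_of_prefixSet_subset {n : ℕ} {F : Finset (Fin n) → ℝ}
    (hF : Submodular F) {P Q : Equiv.Perm (Fin n)} {i : Fin n}
    (hPQ : prefixSet P (P.symm i) ⊆ prefixSet Q (Q.symm i)) :
    lovaszGrad F Q i ≤ lovaszGrad F P i := by
  have hiQ : i ∉ prefixSet Q (Q.symm i) := by simp [mem_prefixSet]
  have := hF hPQ i hiQ
  rw [insert_prefixSet_symm, insert_prefixSet_symm] at this
  simp only [lovaszGrad]
  linarith

lemma Submodular.lovaszGrad_le_of_le_of_eq {n : ℕ} {F : Finset (Fin n) → ℝ}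
    (hF : Submodular F) {x y : Fin n → ℝ} {P Q : Equiv.Perm (Fin n)}
    (hP : Consistent x P) (hQ : Consistent y Q) (hxy : ∀ j, x j ≤ y j) {i : Fin n}
    (hi : x i = y i) : lovaszGrad F Q i ≤ lovaszGrad F P i :=
  hF.lovaszGrad_le_of_prefixSet_subset (prefixSet_symm_subset_of_le_of_eq hP hQ hxy hi)

lemma sign_const_of_card_le_one {ι α : Type*} [Zero α] [LinearOrder α] {s : Finset ι}
    (hs : s.card ≤ 1) (f : ι → α) :
    (∀ i ∈ s, 0 ≤ f i) ∨ (∀ i ∈ s, f i ≤ 0) := by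
  rcases s.eq_empty_or_nonempty with rfl | ⟨a, ha⟩
  · simp
  · have hsub := Finset.card_le_one.mp hs
    rcases le_total 0 (f a) with h | h
    · exact Or.inl fun i hi => hsub i hi a ha ▸ h
    · exact Or.inr fun i hi => hsub i hi a ha ▸ h

lemma abs_sum_eq_sum_abs_of_sign_const {ι G : Type*} [AddCommGroup G] [LinearOrder G]
    [IsOrderedAddMonoid G] {s : Finset ι} {f : ι → G}
    (hf : (∀ i ∈ s, 0 ≤ f i) ∨ (∀ i ∈ s, f i ≤ 0)) :
    |∑ i ∈ s, f i| = ∑ i ∈ s, |f i| := by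
  rcases hf with hf | hf
  · rw [Finset.abs_sum_of_nonneg hf]
    exact sum_congr rfl fun i hi => (abs_of_nonneg (hf i hi)).symm
  · rw [← abs_neg, ← sum_neg_distrib,
      Finset.abs_sum_of_nonneg fun i hi => neg_nonneg.mpr (hf i hi)]
    exact sum_congr rfl fun i hi => (abs_of_nonpos (hf i hi)).symm

theorem cover_sign_constancy_general {n k : ℕ} (F : Finset (Fin n) → ℝ)
    (hsub : Submodular F)
    (x y : Fin n → ℝ)
    (hmono : (∀ i, x i ≤ y i) ∨ (∀ i, y i ≤ x i))
    (P Q : Equiv.Perm (Fin n)) (hP : Consistent x P) (hQ : Consistent y Q)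
    (I : Fin k → Finset (Fin n)) (hI : IsCover x y P Q I) :
    ∀ s : Fin k,
      ((∀ i ∈ I s, 0 ≤ lovaszGrad F Q i - lovaszGrad F P i) ∨
        (∀ i ∈ I s, lovaszGrad F Q i - lovaszGrad F P i ≤ 0)) ∧
      |∑ i ∈ I s, (lovaszGrad F Q i - lovaszGrad F P i)|
        = ∑ i ∈ I s, |lovaszGrad F Q i - lovaszGrad F P i| := by
  intro s
  have hsign : (∀ i ∈ I s, 0 ≤ lovaszGrad F Q i - lovaszGrad F P i) ∨
      (∀ i ∈ I s, lovaszGrad F Q i - lovaszGrad F P i ≤ 0) := by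
    by_cases hcard : 1 < (I s).card
    · have hagree := hI.2.2.2.2 s hcard
      rcases hmono with hxy | hyx
      · exact Or.inr fun i hi =>
          sub_nonpos.mpr (hsub.lovaszGrad_le_of_le_of_eq hP hQ hxy (hagree i hi))
      · exact Or.inl fun i hi =>
          sub_nonneg.mpr (hsub.lovaszGrad_le_of_le_of_eq hQ hP hyx (hagree i hi).symm)
    · exact sign_const_of_card_le_one (not_lt.mp hcard) _
  exact ⟨hsign, abs_sum_eq_sum_abs_of_sign_const hsign⟩

/-- **Sign constancy of subgradient differences on a cover block.** If `y ≥ x` or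
`y ≤ x` coordinatewise and `{I_1,…,I_k}` is a `k`-cover of `(x,y)`, then on each
block the coordinates of `g(y) - g(x)` all have the same sign; in particular the
absolute value of their sum equals the sum of their absolute values. -/
theorem cover_sign_constancy {n k : ℕ} (F : Finset (Fin n) → ℝ)
    (hsub : Submodular F) (h0 : F ∅ = 0)
    (x y : Fin n → ℝ) (hx : ∀ i, x i ∈ Set.Icc (0 : ℝ) 1)
    (hy : ∀ i, y i ∈ Set.Icc (0 : ℝ) 1)
    (hmono : (∀ i, x i ≤ y i) ∨ (∀ i, y i ≤ x i))
    (P Q : Equiv.Perm (Fin n)) (hP : Consistent x P) (hQ : Consistent y Q)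
    (I : Fin k → Finset (Fin n)) (hI : IsCover x y P Q I) :
    ∀ s : Fin k,
      ((∀ i ∈ I s, 0 ≤ lovaszGrad F Q i - lovaszGrad F P i) ∨
        (∀ i ∈ I s, lovaszGrad F Q i - lovaszGrad F P i ≤ 0)) ∧
      |∑ i ∈ I s, (lovaszGrad F Q i - lovaszGrad F P i)|
        = ∑ i ∈ I s, |lovaszGrad F Q i - lovaszGrad F P i| :=
  cover_sign_constancy_general F hsub x y hmono P Q hP hQ I hI
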